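/- arXiv:1311.6416 — 4 statements merged into one kernel-verified Lean document; each statement's English description precedes it below -/
import Mathlib

section
/- Let n ≥ 1, let L̄ be a complex polynomial of degree n, let k ∈ ℕ be such that L̄(j + k) ≠ 0 for every integer j ≥ 1, and let M(z, y₀,…,y_n) be holomorphic in a neighbourhood of 0 ∈ ℂ^{n+2}. Then there exists exactly one formal power series ψ̂ ∈ ℂ[[z]] with ψ̂(0) = 0 satisfying L̄(δ+k)ψ̂ = z · M(z, ψ̂, δψ̂, …, δⁿψ̂), where L̄(δ+k)ψ̂ := Σ_{i} b_i (δ+k)ⁱ ψ̂ for L̄(ξ) = Σ_i b_i ξⁱ. (Each coefficient of ψ̂ is uniquely determined recursively from the previous ones, since L̄(j+k) ≠ 0.) -/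
open PowerSeries

/-- Euler derivative `δu = z·u'`: coefficientwise `(δu)_j = j·u_j`. -/
noncomputable def eulerD (u : PowerSeries ℂ) : PowerSeries ℂ :=
  PowerSeries.mk fun j => (j : ℂ) * PowerSeries.coeff j u

/-- Substitution of one-variable power series (with zero constant terms)
into a multivariate formal power series. -/
noncomputable def substSeries {m : ℕ} (F : MvPowerSeries (Fin m) ℂ)
    (u : Fin m → PowerSeries ℂ) : PowerSeries ℂ :=
  PowerSeries.mk fun j =>
    ∑' d : Fin m →₀ ℕ, MvPowerSeries.coeff d F *
      PowerSeries.coeff j (∏ i : Fin m, (u i) ^ (d i))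

/-- `F` is (the Taylor series at 0 of) a function holomorphic in a neighbourhood
of `0 ∈ ℂ^m`: absolute convergence on some polydisk of positive radius. -/
def ConvNearZero {m : ℕ} (F : MvPowerSeries (Fin m) ℂ) : Prop :=
  ∃ r : ℝ, 0 < r ∧ Summable fun d : Fin m →₀ ℕ =>
    ‖MvPowerSeries.coeff d F‖ * r ^ (d.sum fun _ v => v)

/-- Positive radius of convergence of a formal power series. -/
def PosRadius (u : PowerSeries ℂ) : Prop :=
  ∃ R : ℝ, 0 < R ∧ Summable fun j : ℕ => ‖PowerSeries.coeff j u‖ * R ^ j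

/-- The tuple `(z, φ, δφ, …, δⁿφ)` to be substituted into `F(z,y₀,…,y_n)`. -/
noncomputable def phiArgs (n : ℕ) (φ : PowerSeries ℂ) : Fin (n + 2) → PowerSeries ℂ :=
  fun i => if (i : ℕ) = 0 then PowerSeries.X else eulerD^[(i : ℕ) - 1] φ

/-- Formal partial derivative of a multivariate power series. -/
noncomputable def pderivMv {m : ℕ} (i : Fin m) (F : MvPowerSeries (Fin m) ℂ) :
    MvPowerSeries (Fin m) ℂ :=
  fun d => ((d i : ℂ) + 1) * MvPowerSeries.coeff (d + Finsupp.single i 1) F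


/-- The shifted Euler derivative `(δ + k) u`. -/
noncomputable def dshift (k : ℕ) (u : PowerSeries ℂ) : PowerSeries ℂ :=
  eulerD u + (k : ℂ) • u

/-- `L̄(δ+k)u = Σᵢ bᵢ (δ+k)ⁱ u` for a polynomial `L̄(ξ) = Σᵢ bᵢ ξⁱ`. -/
noncomputable def LpolyOp (L : Polynomial ℂ) (k : ℕ) (u : PowerSeries ℂ) : PowerSeries ℂ :=
  ∑ i ∈ Finset.range (L.natDegree + 1), L.coeff i • (dshift k)^[i] u


/-!
Comparing the coefficients of `zʲ` turns the equation into
`L̄(j + k) ψ̂ⱼ = [M(z, ψ̂, δψ̂, …, δⁿψ̂)]ⱼ₋₁` for `j ≥ 1`, together with `ψ̂₀ = 0`. Since `δ` acts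
diagonally on coefficients and substitution into `M` is compatible with truncation, the
coefficient of `zʲ⁻¹` on the right only involves `ψ̂₀, …, ψ̂ⱼ₋₁`. Dividing by `L̄(j + k) ≠ 0`
exhibits the solutions as the fixed points of a map that is strictly contracting for the
`z`-adic metric, and such a map has exactly one fixed point, built coefficient by coefficient.
-/

section Causality

variable {R : Type*}

def IsCausal [Semiring R] (F : R⟦X⟧ → R⟦X⟧) : Prop :=
  ∀ (N : ℕ) (u v : R⟦X⟧), (∀ i < N, coeff i u = coeff i v) →
    ∀ i < N, coeff i (F u) = coeff i (F v)

def IsStrictlyCausal [Semiring R] (G : R⟦X⟧ → R⟦X⟧) : Prop :=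
  ∀ (j : ℕ) (u v : R⟦X⟧), (∀ i < j, coeff i u = coeff i v) → coeff j (G u) = coeff j (G v)

noncomputable def fixedPtCoeff [Semiring R] (G : R⟦X⟧ → R⟦X⟧) : ℕ → R
  | j => coeff j (G (mk fun i => if i < j then fixedPtCoeff G i else 0))

theorem IsStrictlyCausal.existsUnique_isFixedPt [Semiring R] {G : R⟦X⟧ → R⟦X⟧}
    (hG : IsStrictlyCausal G) : ∃! ψ, Function.IsFixedPt G ψ := by
  refine ⟨mk (fixedPtCoeff G), ?_, fun u hu => ?_⟩
  · ext j
    rw [coeff_mk, fixedPtCoeff]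
    exact hG j _ _ fun i hi => by simp [hi]
  · ext j
    induction j using Nat.strong_induction_on with
    | _ j ih =>
      rw [coeff_mk, fixedPtCoeff, ← hu]
      exact hG j _ _ fun i hi => by rw [coeff_mk, if_pos hi, ih i hi, coeff_mk]

theorem IsCausal.isStrictlyCausal_X_mul [Semiring R] {F : R⟦X⟧ → R⟦X⟧} (hF : IsCausal F) :
    IsStrictlyCausal fun u => X * F u := by
  intro j u v h
  cases j with
  | zero => simp only [coeff_zero_X_mul]
  | succ j =>
    simp only [coeff_succ_X_mul]
    exact hF (j + 1) u v h j j.lt_succ_self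

theorem X_pow_dvd_sub_iff [Ring R] {N : ℕ} {f g : R⟦X⟧} :
    X ^ N ∣ f - g ↔ ∀ i < N, coeff i f = coeff i g := by
  simp only [X_pow_dvd_iff, map_sub, sub_eq_zero]

theorem X_pow_dvd_prod_pow_sub_prod_pow [CommRing R] {ι : Type*} (s : Finset ι) (d : ι → ℕ)
    {N : ℕ} {u v : ι → R⟦X⟧} (h : ∀ i ∈ s, X ^ N ∣ u i - v i) :
    X ^ N ∣ ∏ i ∈ s, u i ^ d i - ∏ i ∈ s, v i ^ d i := by
  simp only [← Ideal.mem_span_singleton, ← Ideal.Quotient.eq, map_prod, map_pow] at h ⊢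
  exact Finset.prod_congr rfl fun i hi => by rw [h i hi]

end Causality

theorem coeff_eulerD (u : PowerSeries ℂ) (j : ℕ) : coeff j (eulerD u) = j * coeff j u :=
  coeff_mk _ _

theorem coeff_eulerD_iterate (s : ℕ) (u : PowerSeries ℂ) (j : ℕ) :
    coeff j (eulerD^[s] u) = (j : ℂ) ^ s * coeff j u := by
  induction s with
  | zero => simp
  | succ s ih => rw [Function.iterate_succ_apply', coeff_eulerD, ih, pow_succ]; ring

theorem coeff_dshift_iterate (k i : ℕ) (u : PowerSeries ℂ) (j : ℕ) :
    coeff j ((dshift k)^[i] u) = ((j + k : ℕ) : ℂ) ^ i * coeff j u := by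
  induction i with
  | zero => simp
  | succ i ih =>
    rw [Function.iterate_succ_apply']
    simp only [dshift, map_add, map_smul, coeff_eulerD, ih, smul_eq_mul]
    push_cast
    ring

theorem coeff_LpolyOp (L : Polynomial ℂ) (k : ℕ) (u : PowerSeries ℂ) (j : ℕ) :
    coeff j (LpolyOp L k u) = L.eval ((j + k : ℕ) : ℂ) * coeff j u := by
  simp only [LpolyOp, map_sum, map_smul, coeff_dshift_iterate, smul_eq_mul,
    Polynomial.eval_eq_sum_range, Finset.sum_mul, mul_assoc]

theorem isCausal_eulerD_iterate (s : ℕ) : IsCausal (eulerD^[s]) := by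
  intro N u v h i hi
  rw [coeff_eulerD_iterate, coeff_eulerD_iterate, h i hi]

theorem isCausal_substSeries {m : ℕ} (F : MvPowerSeries (Fin m) ℂ)
    {w : Fin m → PowerSeries ℂ → PowerSeries ℂ} (hw : ∀ i, IsCausal (w i)) :
    IsCausal fun u => substSeries F fun i => w i u := by
  intro N u v h t ht
  simp only [substSeries, coeff_mk]
  refine tsum_congr fun d => congrArg _ ?_
  have hprod := X_pow_dvd_prod_pow_sub_prod_pow Finset.univ d
    fun i _ => X_pow_dvd_sub_iff.2 (hw i N u v h)
  exact X_pow_dvd_sub_iff.1 hprod t ht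

theorem isCausal_substSeries_phiArgs (n : ℕ) (M : MvPowerSeries (Fin (n + 2)) ℂ) :
    IsCausal fun u => substSeries M (phiArgs n u) := by
  refine isCausal_substSeries M fun i => ?_
  by_cases hi : (i : ℕ) = 0
  · simp only [phiArgs, if_pos hi]
    exact fun _ _ _ _ _ _ => rfl
  · simp only [phiArgs, if_neg hi]
    exact isCausal_eulerD_iterate _

/-- At `j = 0` the coefficient is `0 / L̄(k) = 0`, even when `L̄(k) = 0`. -/
noncomputable def recursionMap (L : Polynomial ℂ) (k : ℕ) (G : PowerSeries ℂ → PowerSeries ℂ)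
    (ψ : PowerSeries ℂ) : PowerSeries ℂ :=
  mk fun j => coeff j (X * G ψ) / L.eval ((j + k : ℕ) : ℂ)

theorem IsCausal.isStrictlyCausal_recursionMap {G : PowerSeries ℂ → PowerSeries ℂ}
    (hG : IsCausal G) (L : Polynomial ℂ) (k : ℕ) : IsStrictlyCausal (recursionMap L k G) := by
  intro j u v h
  simp only [recursionMap, coeff_mk, hG.isStrictlyCausal_X_mul j u v h]

theorem solution_iff_isFixedPt_recursionMap {L : Polynomial ℂ} {k : ℕ}
    (hLk : ∀ j : ℕ, 1 ≤ j → L.eval ((j + k : ℕ) : ℂ) ≠ 0)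
    (G : PowerSeries ℂ → PowerSeries ℂ) (ψ : PowerSeries ℂ) :
    (constantCoeff ψ = 0 ∧ LpolyOp L k ψ = X * G ψ) ↔
      Function.IsFixedPt (recursionMap L k G) ψ := by
  simp only [Function.IsFixedPt, PowerSeries.ext_iff, coeff_LpolyOp, recursionMap, coeff_mk]
  constructor
  · rintro ⟨h₀, h⟩ (_ | j)
    · simp [h₀]
    · rw [← h, mul_div_cancel_left₀ _ (hLk _ j.succ_pos)]
  · intro h
    have h₀ : constantCoeff ψ = 0 := by simpa using (h 0).symm
    refine ⟨h₀, fun j => ?_⟩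
    cases j with
    | zero => simp [h₀]
    | succ j => rw [← h, mul_div_cancel₀ _ (hLk _ j.succ_pos)]

theorem prepared_equation_unique_formal_solution_general (n : ℕ)
    (L : Polynomial ℂ) (k : ℕ)
    (hLk : ∀ j : ℕ, 1 ≤ j → L.eval ((j + k : ℕ) : ℂ) ≠ 0)
    (M : MvPowerSeries (Fin (n + 2)) ℂ) :
    ∃! ψ : PowerSeries ℂ, PowerSeries.constantCoeff ψ = 0 ∧
      LpolyOp L k ψ = PowerSeries.X * substSeries M (phiArgs n ψ) :=
  (existsUnique_congr (solution_iff_isFixedPt_recursionMap hLk _)).2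
    ((isCausal_substSeries_phiArgs n M).isStrictlyCausal_recursionMap L k).existsUnique_isFixedPt

/-- The prepared equation `L̄(δ+k)ψ̂ = z·M(z, ψ̂, δψ̂, …, δⁿψ̂)` has exactly one formal
power series solution with zero constant term, provided `L̄(j+k) ≠ 0` for all `j ≥ 1`. -/
theorem prepared_equation_unique_formal_solution (n : ℕ) (hn : 1 ≤ n)
    (L : Polynomial ℂ) (hdeg : L.degree = (n : ℕ)) (k : ℕ)
    (hLk : ∀ j : ℕ, 1 ≤ j → L.eval ((j + k : ℕ) : ℂ) ≠ 0)
    (M : MvPowerSeries (Fin (n + 2)) ℂ) (hM : ConvNearZero M) :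
    ∃! ψ : PowerSeries ℂ, PowerSeries.constantCoeff ψ = 0 ∧
      LpolyOp L k ψ = PowerSeries.X * substSeries M (phiArgs n ψ) :=
  prepared_equation_unique_formal_solution_general n L k hLk M
end

section
/- Let n ≥ 1 and let P be a complex polynomial of degree exactly n − 1 such that P(j) ≠ 0 for every integer j ≥ 1. Then the image of the set Hⁿ = { (a_j)_{j≥1} : Σ_{j≥1} jⁿ |a_j| < ∞ } under the map (a_j)_{j≥1} ↦ (P(j)·a_j)_{j≥1} equals H¹ = { (b_j)_{j≥1} : Σ_{j≥1} j |b_j| < ∞ }; in particular the map from Hⁿ to H⁰ = { (b_j)_{j≥1} : Σ_{j≥1} |b_j| < ∞ } is not surjective. -/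
/-- The coefficient space `Hᵐ` of the Banach space of power series `Σ_{j≥1} aⱼ zʲ`
with `Σ_{j≥1} jᵐ|aⱼ| < ∞`; the sequence `(aⱼ)_{j≥1}` is encoded as `a : ℕ → ℂ`
with `a j` standing for `a_{j+1}`. -/
def Hspace (m : ℕ) : Set (ℕ → ℂ) :=
  {a : ℕ → ℂ | Summable fun j : ℕ => ((j + 1 : ℕ) : ℝ) ^ m * ‖a j‖}

/-!
Since `P` has degree `d = n - 1`, `|P(j)| ≍ jᵈ`, so the weighted terms `j |P(j) aⱼ|` and
`jⁿ |aⱼ|` are of the same order and one series converges iff the other does; as `P(j) ≠ 0`,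
dividing by `P(j)` inverts the map. The sequence `1 / j²` lies in `H⁰` but not in `H¹`.
-/

open Filter Asymptotics Polynomial

theorem Polynomial.isTheta_eval_natCast {R : Type*} [NormedField R] [NormSMulClass ℤ R]
    {P : R[X]} (hP : P ≠ 0) :
    (fun j : ℕ => P.eval (j : R)) =Θ[atTop] fun j => (j : R) ^ P.natDegree := by
  have h := ((isEquivalent_cobounded_leading_monomial (P := P)).comp_tendsto
    tendsto_natCast_atTop_cobounded).isTheta
  exact (isTheta_const_mul_right (leadingCoeff_ne_zero.mpr hP)).mp h

theorem mul_mem_Hspace_iff {w : ℕ → ℂ} {d : ℕ}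
    (hw : w =Θ[atTop] fun j => ((j + 1 : ℕ) : ℂ) ^ d) (m : ℕ) (a : ℕ → ℂ) :
    (fun j => w j * a j) ∈ Hspace m ↔ a ∈ Hspace (d + m) := by
  have hnorm : (fun j => ‖w j‖) =Θ[atTop] fun j => ((j + 1 : ℕ) : ℝ) ^ d := by
    simpa only [norm_pow, Complex.norm_natCast] using hw.norm_left.norm_right
  have hterms : (fun j => ((j + 1 : ℕ) : ℝ) ^ m * ‖w j * a j‖) =Θ[atTop]
      fun j => ((j + 1 : ℕ) : ℝ) ^ (d + m) * ‖a j‖ := by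
    simpa only [norm_mul, pow_add, mul_comm, mul_left_comm, mul_assoc] using
      (isTheta_refl (fun j : ℕ => ((j + 1 : ℕ) : ℝ) ^ m) atTop).mul
        (hnorm.mul (isTheta_refl (fun j => ‖a j‖) atTop))
  exact ⟨fun h => summable_of_isBigO_nat h hterms.symm.isBigO,
    fun h => summable_of_isBigO_nat h hterms.isBigO⟩

theorem image_mul_Hspace {w : ℕ → ℂ} {d : ℕ} (hw0 : ∀ j, w j ≠ 0)
    (hw : w =Θ[atTop] fun j => ((j + 1 : ℕ) : ℂ) ^ d) (m : ℕ) :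
    (fun (a : ℕ → ℂ) j => w j * a j) '' Hspace (d + m) = Hspace m := by
  ext b
  refine ⟨?_, fun hb => ⟨fun j => b j / w j, ?_, funext fun j => mul_div_cancel₀ _ (hw0 j)⟩⟩
  · rintro ⟨a, ha, rfl⟩
    exact (mul_mem_Hspace_iff hw m a).mpr ha
  · refine (mul_mem_Hspace_iff hw m _).mp ?_
    simpa only [mul_div_cancel₀ _ (hw0 _)] using hb

theorem not_Hspace_subset_succ (m : ℕ) : ¬ Hspace m ⊆ Hspace (m + 1) := by
  set b : ℕ → ℂ := fun j => (((j + 1 : ℕ) : ℂ) ^ (m + 2))⁻¹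
  have hmem : ∀ k ≤ 2, b ∈ Hspace (m + k) ↔ 1 < 2 - k := by
    intro k hk
    rw [← Real.summable_nat_pow_inv, ← summable_nat_add_iff 1]
    refine summable_congr fun j => ?_
    have hx : ((j + 1 : ℕ) : ℝ) ≠ 0 := by positivity
    rw [norm_inv, norm_pow, Complex.norm_natCast, ← div_eq_mul_inv,
      show m + 2 = m + k + (2 - k) by omega, pow_add _ (m + k),
      div_mul_cancel_left₀ (pow_ne_zero _ hx)]
  intro hsub
  have h1 := (hmem 1 (by norm_num)).mp (hsub ((hmem 0 (by norm_num)).mpr (by norm_num)))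
  norm_num at h1

/-- For a polynomial `P` of degree exactly `n − 1` with `P(j) ≠ 0` for all integers `j ≥ 1`,
the image of `Hⁿ` under `(aⱼ)_{j≥1} ↦ (P(j)·aⱼ)_{j≥1}` equals `H¹`; in particular the map
from `Hⁿ` to `H⁰` is not surjective. -/
theorem mul_by_poly_image_not_surjective (n : ℕ) (hn : 1 ≤ n)
    (P : Polynomial ℂ) (hdeg : P.degree = ((n - 1 : ℕ) : ℕ))
    (hP : ∀ j : ℕ, 1 ≤ j → P.eval (j : ℂ) ≠ 0) :
    ((fun (a : ℕ → ℂ) (j : ℕ) => P.eval ((j + 1 : ℕ) : ℂ) * a j) '' Hspace n = Hspace 1) ∧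
    ¬ Set.SurjOn (fun (a : ℕ → ℂ) (j : ℕ) => P.eval ((j + 1 : ℕ) : ℂ) * a j)
        (Hspace n) (Hspace 0) := by
  obtain ⟨d, rfl⟩ : ∃ d, n = d + 1 := ⟨n - 1, by omega⟩
  have hnat : P.natDegree = d := natDegree_eq_of_degree_eq_some hdeg
  have hP0 : P ≠ 0 := fun h => by simp [h] at hdeg
  have hw : (fun j : ℕ => P.eval ((j + 1 : ℕ) : ℂ)) =Θ[atTop]
      fun j => ((j + 1 : ℕ) : ℂ) ^ d := by
    obtain ⟨hO, hΩ⟩ := hnat ▸ isTheta_eval_natCast hP0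
    exact ⟨hO.comp_tendsto (tendsto_add_atTop_nat 1), hΩ.comp_tendsto (tendsto_add_atTop_nat 1)⟩
  have himage := image_mul_Hspace (fun j => hP (j + 1) j.succ_pos) hw 1
  exact ⟨himage, fun hsurj => not_Hspace_subset_succ 0 (himage ▸ hsurj)⟩
end

section
/- Let σ, ρ, μ, r be positive real numbers and n ≥ 0 an integer, and define f(z,w) = σ·w·(1 − w/ρ)^{n+1} − μz/(1 − z/r) for z ≠ r. Then the pair (z₀, w₀) with w₀ = ρ/(n+2) and z₀ = r·ρ/(ρ + μr/(σN)), where N = (n+1)^{n+1}/(n+2)^{n+2}, satisfies f(z₀, w₀) = 0 and ∂f/∂w(z₀, w₀) = 0; moreover, it is the unique pair (z, w) ∈ ℂ² with z ≠ r and w ≠ ρ satisfying both equations. -/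
/-!
Off `w = ρ`, the derivative `∂f/∂w` vanishes only at `w₀ = ρ/(n+2)`, where `σw(1 - w/ρ)^{n+1}`
takes the value `σρN`. What is left of `f = 0` is `σρN = μz/(1 - z/r)`, which is linear in `z`
after clearing the denominator and has the single root `r·σρN/(σρN + μr) = z₀`.
-/

section

variable {K : Type*} [Field K]

theorem sub_mul_div_one_sub_div_eq_zero_iff {c μ r z : K} (hr : r ≠ 0) (hz : z ≠ r)
    (hc : c + μ * r ≠ 0) : c - μ * z / (1 - z / r) = 0 ↔ z = r * c / (c + μ * r) := by
  have hrz : r - z ≠ 0 := sub_ne_zero.mpr hz.symm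
  rw [one_sub_div hr, div_div_eq_mul_div, sub_eq_zero, eq_div_iff hrz, eq_div_iff hc]
  constructor <;> intro h <;> linear_combination -h

theorem mul_div_add_mul_ne_self {c μ r : K} (hr : r ≠ 0) (hμ : μ ≠ 0) (hc : c + μ * r ≠ 0) :
    r * c / (c + μ * r) ≠ r := by
  rw [Ne, div_eq_iff hc]
  intro h
  exact mul_ne_zero hμ hr (by linear_combination -(mul_left_cancel₀ hr h))

variable [CharZero K]

theorem mul_one_sub_div_pow_mul_eq_zero_iff {σ ρ w : K} (n : ℕ) (hσ : σ ≠ 0) (hρ : ρ ≠ 0)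
    (hw : w ≠ ρ) : σ * (1 - w / ρ) ^ n * (1 - (n + 2) * w / ρ) = 0 ↔ w = ρ / (n + 2) := by
  have hn : (n + 2 : K) ≠ 0 := by norm_cast
  have hwρ : 1 - w / ρ ≠ 0 := by
    rwa [one_sub_div hρ, div_ne_zero_iff, sub_ne_zero, and_iff_left hρ, ne_comm]
  rw [mul_eq_zero, or_iff_right (mul_ne_zero hσ (pow_ne_zero n hwρ)), sub_eq_zero, eq_comm,
    div_eq_one_iff_eq hρ, eq_div_iff hn, mul_comm]

theorem mul_div_add_two_mul_one_sub_pow_succ (σ ρ : K) (n : ℕ) :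
    σ * (ρ / (n + 2)) * (1 - ρ / (n + 2) / ρ) ^ (n + 1)
      = σ * ρ * ((n + 1) ^ (n + 1) / (n + 2) ^ (n + 2)) := by
  rcases eq_or_ne ρ 0 with rfl | hρ
  · simp
  have hn : (n + 2 : K) ≠ 0 := by norm_cast
  have : 1 - ρ / (n + 2) / ρ = (n + 1) / (n + 2) := by field_simp; ring
  rw [this, div_pow]
  field_simp
  ring

end

/-- The system `f(z,w) = 0`, `∂f/∂w(z,w) = 0` for
`f(z,w) = σw(1−w/ρ)^{n+1} − μz/(1−z/r)` has the unique solution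
`w₀ = ρ/(n+2)`, `z₀ = rρ/(ρ + μr/(σN))`, `N = (n+1)^{n+1}/(n+2)^{n+2}`,
among pairs `(z,w) ∈ ℂ²` with `z ≠ r`, `w ≠ ρ`. -/
theorem branch_point_system (σ ρ μ r : ℝ) (hσ : 0 < σ) (hρ : 0 < ρ) (hμ : 0 < μ)
    (hr : 0 < r) (n : ℕ)
    (f fw : ℂ → ℂ → ℂ)
    (hf : ∀ z w : ℂ, f z w = σ * w * (1 - w / ρ) ^ (n + 1) - μ * z / (1 - z / r))
    (hfw : ∀ z w : ℂ, fw z w = σ * (1 - w / ρ) ^ n * (1 - (n + 2) * w / ρ))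
    (N z₀ w₀ : ℝ)
    (hN : N = (n + 1 : ℝ) ^ (n + 1) / (n + 2 : ℝ) ^ (n + 2))
    (hz₀ : z₀ = r * ρ / (ρ + μ * r / (σ * N)))
    (hw₀ : w₀ = ρ / (n + 2)) :
    (f (z₀ : ℂ) (w₀ : ℂ) = 0 ∧ fw (z₀ : ℂ) (w₀ : ℂ) = 0) ∧
    ∀ z w : ℂ, z ≠ (r : ℂ) → w ≠ (ρ : ℂ) → f z w = 0 → fw z w = 0 →
      z = (z₀ : ℂ) ∧ w = (w₀ : ℂ) := by
  have hN₀ : 0 < N := hN ▸ by positivity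
  have hc : (σ * ρ * N + μ * r : ℂ) ≠ 0 := by
    exact_mod_cast (by positivity : (0 : ℝ) < σ * ρ * N + μ * r).ne'
  have hσ₀ : (σ : ℂ) ≠ 0 := by exact_mod_cast hσ.ne'
  have hρ₀ : (ρ : ℂ) ≠ 0 := by exact_mod_cast hρ.ne'
  have hμ₀ : (μ : ℂ) ≠ 0 := by exact_mod_cast hμ.ne'
  have hr₀ : (r : ℂ) ≠ 0 := by exact_mod_cast hr.ne'
  have hN₀' : (N : ℂ) ≠ 0 := by exact_mod_cast hN₀.ne'
  have hw₀c : (w₀ : ℂ) = ρ / (n + 2) := by rw [hw₀]; push_cast; rfl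
  have hz₀c : (z₀ : ℂ) = r * (σ * ρ * N) / (σ * ρ * N + μ * r) := by
    rw [hz₀]; push_cast; field_simp
  have hz₀r : (z₀ : ℂ) ≠ r := hz₀c ▸ mul_div_add_mul_ne_self hr₀ hμ₀ hc
  have hf_w₀ : ∀ z, f z w₀ = σ * ρ * N - μ * z / (1 - z / r) := by
    intro z
    rw [hf, hw₀c, mul_div_add_two_mul_one_sub_pow_succ, hN]
    push_cast; rfl
  have hfw_iff : ∀ z w : ℂ, w ≠ ρ → (fw z w = 0 ↔ w = w₀) := by
    intro z w hw
    rw [hfw, hw₀c]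
    exact mul_one_sub_div_pow_mul_eq_zero_iff n hσ₀ hρ₀ hw
  refine ⟨⟨?_, ?_⟩, fun z w hz hw hf0 hfw0 => ?_⟩
  · rw [hf_w₀, sub_mul_div_one_sub_div_eq_zero_iff hr₀ hz₀r hc, hz₀c]
  · rw [hfw, hw₀c, mul_div_cancel₀ _ (by norm_cast), div_self hρ₀, sub_self, mul_zero]
  · obtain rfl := (hfw_iff z w hw).mp hfw0
    rw [hf_w₀, sub_mul_div_one_sub_div_eq_zero_iff hr₀ hz hc, ← hz₀c] at hf0
    exact ⟨hf0, rfl⟩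
end

section
/- Let σ, ρ, μ, r be positive real numbers, n ≥ 0 an integer, N = (n+1)^{n+1}/(n+2)^{n+2}, and z₀ = r·ρ/(ρ + μr/(σN)) (note z₀ < r). Then there exists a holomorphic function w on the open disk { z ∈ ℂ : |z| < z₀ } with w(0) = 0 such that σ·w(z)·(1 − w(z)/ρ)^{n+1} = μz/(1 − z/r) for all |z| < z₀. -/
/-!
Writing `w = ρ u` and `ζ = μ z / (σ ρ (1 - z / r))`, the equation becomes `u (1 - u)^(n+1) = ζ`,
and `z ↦ ζ` maps the disk `|z| < z₀` into the disk `|ζ| < N`. On `|v| ≤ 1/(n+2)` we have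
`|1 - v| ≥ (n+1)/(n+2)`, so for `|ζ| < N` the map `v ↦ ζ (1 - v)^(-(n+1))` sends this disk into
itself and is a contraction with constant `|ζ| / N`. Its iterates starting at `0` are holomorphic
in `ζ` and converge locally uniformly, hence the fixed point `u(ζ)` is holomorphic.
-/

open Filter Function Metric Set Topology
open scoped NNReal

section ParametricContraction

theorem exists_isFixedPt_dist_iterate_le {α : Type*} [MetricSpace α] {f : α → α} {K : Set α}
    {q : ℝ≥0} (hKc : IsComplete K) (hKb : Bornology.IsBounded K) (hfK : MapsTo f K K)
    (hq : q < 1) (hf : LipschitzOnWith q f K) {x : α} (hx : x ∈ K) :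
    ∃ y ∈ K, IsFixedPt f y ∧ Tendsto (fun n ↦ f^[n] x) atTop (𝓝 y) ∧
      ∀ n, dist (f^[n] x) y ≤ diam K * q ^ n / (1 - q) := by
  have := hKc.completeSpace_coe
  have : Nonempty K := ⟨⟨x, hx⟩⟩
  set g := hfK.restrict f K K
  have hg : ContractingWith q g := ⟨hq, hf.mapsToRestrict hfK⟩
  have hiter : ∀ n, f^[n] x = (g^[n] ⟨x, hx⟩ : K) := fun n ↦ by
    rw [hfK.iterate_restrict]; rfl
  refine ⟨(ContractingWith.fixedPoint g hg : K), Subtype.coe_prop _,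
    congrArg Subtype.val (ContractingWith.fixedPoint_isFixedPt hg), ?_, fun n ↦ ?_⟩
  · simp only [hiter]
    exact (continuous_subtype_val.tendsto _).comp (hg.tendsto_iterate_fixedPoint ⟨x, hx⟩)
  · rw [hiter]
    calc _ ≤ dist (⟨x, hx⟩ : K) (g ⟨x, hx⟩) * q ^ n / (1 - q) :=
          hg.apriori_dist_iterate_fixedPoint_le _ n
      _ ≤ diam K * q ^ n / (1 - q) := by
          gcongr
          · exact sub_nonneg.2 hq.le
          · exact dist_le_diam_of_mem hKb hx (hfK hx)

theorem differentiableOn_iterate_apply {𝕜 Z E : Type*} [NontriviallyNormedField 𝕜]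
    [NormedAddCommGroup Z] [NormedSpace 𝕜 Z] [NormedAddCommGroup E] [NormedSpace 𝕜 E]
    {F : Z → E → E} {U : Set Z} {V K : Set E} (hU : IsOpen U) (hV : IsOpen V) (hKV : K ⊆ V)
    (hF : DifferentiableOn 𝕜 (fun p : Z × E ↦ F p.1 p.2) (U ×ˢ V))
    (hFK : ∀ z ∈ U, MapsTo (F z) K K) {w₀ : E} (hw₀ : w₀ ∈ K) (m : ℕ) :
    DifferentiableOn 𝕜 (fun z ↦ (F z)^[m] w₀) U := by
  induction m with
  | zero => exact differentiableOn_const w₀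
  | succ m ih =>
    intro z hz
    have hmem : (z, (F z)^[m] w₀) ∈ U ×ˢ V := ⟨hz, hKV ((hFK z hz).iterate m hw₀)⟩
    simp only [iterate_succ_apply']
    exact ((hF.differentiableAt ((hU.prod hV).mem_nhds hmem)).comp z
      (differentiableAt_id.prodMk (ih.differentiableAt (hU.mem_nhds hz)))).differentiableWithinAt

variable {E : Type*} [NormedAddCommGroup E] [NormedSpace ℂ E] [CompleteSpace E]

theorem exists_differentiableOn_isFixedPt {F : ℂ → E → E} {U : Set ℂ} {V K : Set E}
    (hU : IsOpen U) (hV : IsOpen V) (hKc : IsClosed K) (hKb : Bornology.IsBounded K)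
    (hKV : K ⊆ V) {w₀ : E} (hw₀ : w₀ ∈ K)
    (hF : DifferentiableOn ℂ (fun p : ℂ × E ↦ F p.1 p.2) (U ×ˢ V))
    (hcontr : ∀ z ∈ U, ∃ q : ℝ≥0, q < 1 ∧
      ∀ᶠ z' in 𝓝 z, MapsTo (F z') K K ∧ LipschitzOnWith q (F z') K) :
    ∃ w : ℂ → E, DifferentiableOn ℂ w U ∧ ∀ z ∈ U, w z ∈ K ∧ IsFixedPt (F z) (w z) := by
  set u : ℕ → ℂ → E := fun m z ↦ (F z)^[m] w₀
  set w : ℂ → E := fun z ↦ limUnder atTop (u · z)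
  have hw : ∀ {z q}, q < 1 → MapsTo (F z) K K → LipschitzOnWith q (F z) K →
      w z ∈ K ∧ IsFixedPt (F z) (w z) ∧ ∀ m, dist (u m z) (w z) ≤ diam K * q ^ m / (1 - q) := by
    intro z q hq hmaps hlip
    obtain ⟨y, hyK, hfix, htendsto, hdist⟩ :=
      exists_isFixedPt_dist_iterate_le hKc.isComplete hKb hmaps hq hlip hw₀
    rw [show w z = y from htendsto.limUnder_eq]
    exact ⟨hyK, hfix, hdist⟩
  have hu : ∀ m, DifferentiableOn ℂ (u m) U :=
    differentiableOn_iterate_apply hU hV hKV hF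
      (fun z hz ↦ let ⟨_, _, hev⟩ := hcontr z hz; hev.self_of_nhds.1) hw₀
  have hgeom : ∀ q : ℝ≥0, q < 1 → Tendsto (fun m ↦ diam K * q ^ m / (1 - q)) atTop (𝓝 0) :=
    fun q hq ↦ by
      simpa using ((tendsto_pow_atTop_nhds_zero_of_lt_one q.2 hq).const_mul (diam K)).div_const
        (1 - (q : ℝ))
  refine ⟨w, ?_, fun z hz ↦ ?_⟩
  · refine TendstoLocallyUniformlyOn.differentiableOn (F := u) (φ := atTop) ?_
      (Eventually.of_forall hu) hU
    rw [Metric.tendstoLocallyUniformlyOn_iff]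
    intro ε hε z hz
    obtain ⟨q, hq, hev⟩ := hcontr z hz
    refine ⟨_, mem_nhdsWithin_of_mem_nhds hev, ?_⟩
    filter_upwards [(hgeom q hq).eventually (gt_mem_nhds hε)] with m hm z' hz'
    rw [dist_comm]
    exact ((hw hq hz'.1 hz'.2).2.2 m).trans_lt hm
  · obtain ⟨q, hq, hev⟩ := hcontr z hz
    exact (hw hq hev.self_of_nhds.1 hev.self_of_nhds.2).imp_right And.left

end ParametricContraction

-- The value of `u (1 - u)^(n+1)` at its critical point `u = 1/(n+2)`.
noncomputable def criticalValue (n : ℕ) : ℝ := (n + 1 : ℝ) ^ (n + 1) / (n + 2 : ℝ) ^ (n + 2)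

theorem criticalValue_pos (n : ℕ) : 0 < criticalValue n := by
  unfold criticalValue; positivity

theorem criticalValue_mul_pow_succ (n : ℕ) :
    criticalValue n * ((n + 2) / (n + 1) : ℝ) ^ (n + 1) = (n + 2 : ℝ)⁻¹ := by
  rw [criticalValue, div_pow]
  field_simp
  ring

theorem criticalValue_mul_succ_mul_pow (n : ℕ) :
    criticalValue n * ((n + 1) * ((n + 2) / (n + 1) : ℝ) ^ (n + 2)) = 1 := by
  rw [criticalValue, div_pow]
  field_simp
  ring

theorem sub_le_norm_one_sub {R : Type*} [SeminormedRing R] [NormOneClass R] {v : R} {c : ℝ}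
    (hv : ‖v‖ ≤ c) : 1 - c ≤ ‖1 - v‖ := by
  have := norm_sub_norm_le (1 : R) v
  rw [norm_one] at this
  linarith

theorem one_sub_ne_zero_of_norm_lt_one {R : Type*} [NormedRing R] [NormOneClass R] {v : R}
    (hv : ‖v‖ < 1) : 1 - v ≠ 0 :=
  norm_pos_iff.1 ((sub_pos.2 hv).trans_le (sub_le_norm_one_sub le_rfl))

theorem hasDerivAt_inv_one_sub_pow {n : ℕ} {v : ℂ} (hv : 1 - v ≠ 0) :
    HasDerivAt (fun v ↦ ((1 - v) ^ (n + 1))⁻¹) ((n + 1) * ((1 - v) ^ (n + 2))⁻¹) v := by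
  have h : HasDerivAt (fun v : ℂ ↦ (1 - v) ^ (n + 1)) (-((n + 1) * (1 - v) ^ n)) v := by
    simpa using ((hasDerivAt_id v).const_sub 1).fun_pow (n + 1)
  refine (h.fun_inv (pow_ne_zero _ hv)).congr_deriv ?_
  field_simp
  ring

section CriticalDisk

variable {n : ℕ} {ζ v : ℂ}

theorem norm_inv_one_sub_pow_le (hv : ‖v‖ ≤ (n + 2 : ℝ)⁻¹) (k : ℕ) :
    ‖((1 - v) ^ k)⁻¹‖ ≤ ((n + 2) / (n + 1) : ℝ) ^ k := by
  have h : (n + 1) / (n + 2 : ℝ) ≤ ‖1 - v‖ := by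
    convert sub_le_norm_one_sub hv using 1
    field_simp
    ring
  rw [norm_inv, norm_pow, ← inv_pow, ← inv_div]
  gcongr

theorem mapsTo_closedBall_mul_inv_one_sub_pow (hζ : ‖ζ‖ ≤ criticalValue n) :
    MapsTo (fun v ↦ ζ * ((1 - v) ^ (n + 1))⁻¹) (closedBall 0 (n + 2 : ℝ)⁻¹)
      (closedBall 0 (n + 2 : ℝ)⁻¹) := by
  intro v hv
  rw [mem_closedBall_zero_iff] at hv ⊢
  calc ‖ζ * ((1 - v) ^ (n + 1))⁻¹‖ = ‖ζ‖ * ‖((1 - v) ^ (n + 1))⁻¹‖ := norm_mul _ _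
    _ ≤ criticalValue n * ((n + 2) / (n + 1) : ℝ) ^ (n + 1) :=
        mul_le_mul hζ (norm_inv_one_sub_pow_le hv _) (norm_nonneg _) (criticalValue_pos n).le
    _ = (n + 2 : ℝ)⁻¹ := criticalValue_mul_pow_succ n

theorem lipschitzOnWith_mul_inv_one_sub_pow {q : ℝ≥0} (hζ : ‖ζ‖ ≤ q * criticalValue n) :
    LipschitzOnWith q (fun v ↦ ζ * ((1 - v) ^ (n + 1))⁻¹) (closedBall 0 (n + 2 : ℝ)⁻¹) := by
  have hK : ∀ v ∈ closedBall (0 : ℂ) (n + 2 : ℝ)⁻¹, ‖v‖ ≤ (n + 2 : ℝ)⁻¹ :=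
    fun v hv ↦ mem_closedBall_zero_iff.1 hv
  refine (convex_closedBall _ _).lipschitzOnWith_of_nnnorm_hasDerivWithin_le
    (fun v hv ↦ ((hasDerivAt_inv_one_sub_pow (one_sub_ne_zero_of_norm_lt_one ?_)).const_mul
      ζ).hasDerivWithinAt) fun v hv ↦ ?_
  · exact (hK v hv).trans_lt (inv_lt_one_of_one_lt₀ (by linarith))
  · rw [← NNReal.coe_le_coe, coe_nnnorm, norm_mul, norm_mul]
    calc ‖ζ‖ * (‖(n + 1 : ℂ)‖ * ‖((1 - v) ^ (n + 2))⁻¹‖)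
        ≤ q * criticalValue n * ((n + 1) * ((n + 2) / (n + 1) : ℝ) ^ (n + 2)) := by
          have : ‖(n + 1 : ℂ)‖ = n + 1 := by norm_cast
          rw [this]
          have := criticalValue_pos n
          gcongr
          exact norm_inv_one_sub_pow_le (hK v hv) _
      _ = q := by rw [mul_assoc, criticalValue_mul_succ_mul_pow, mul_one]

theorem eventually_contracting_mul_inv_one_sub_pow (hζ : ‖ζ‖ < criticalValue n) :
    ∃ q : ℝ≥0, q < 1 ∧ ∀ᶠ ζ' in 𝓝 ζ,
      MapsTo (fun v ↦ ζ' * ((1 - v) ^ (n + 1))⁻¹) (closedBall 0 (n + 2 : ℝ)⁻¹)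
        (closedBall 0 (n + 2 : ℝ)⁻¹) ∧
      LipschitzOnWith q (fun v ↦ ζ' * ((1 - v) ^ (n + 1))⁻¹) (closedBall 0 (n + 2 : ℝ)⁻¹) := by
  have hN := criticalValue_pos n
  obtain ⟨s, hζs, hsN⟩ := exists_between hζ
  have hs : 0 ≤ s := (norm_nonneg ζ).trans hζs.le
  refine ⟨(s / criticalValue n).toNNReal, ?_, ?_⟩
  · rw [Real.toNNReal_lt_one, div_lt_one hN]
    exact hsN
  · filter_upwards [isOpen_ball.mem_nhds (mem_ball_zero_iff.2 hζs)] with ζ' hζ'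
    have hζ's : ‖ζ'‖ ≤ s := (mem_ball_zero_iff.1 hζ').le
    refine ⟨mapsTo_closedBall_mul_inv_one_sub_pow (hζ's.trans hsN.le),
      lipschitzOnWith_mul_inv_one_sub_pow ?_⟩
    rwa [Real.coe_toNNReal _ (by positivity), div_mul_cancel₀ _ hN.ne']

end CriticalDisk

theorem exists_differentiableOn_mul_one_sub_pow_eq (n : ℕ) :
    ∃ u : ℂ → ℂ, DifferentiableOn ℂ u (ball 0 (criticalValue n)) ∧ u 0 = 0 ∧
      ∀ ζ ∈ ball 0 (criticalValue n), u ζ * (1 - u ζ) ^ (n + 1) = ζ := by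
  have hN := criticalValue_pos n
  have hKV : closedBall (0 : ℂ) (n + 2 : ℝ)⁻¹ ⊆ ball 0 1 :=
    closedBall_subset_ball (inv_lt_one_of_one_lt₀ (by linarith))
  have hF : DifferentiableOn ℂ (fun p : ℂ × ℂ ↦ p.1 * ((1 - p.2) ^ (n + 1))⁻¹)
      (ball 0 (criticalValue n) ×ˢ ball 0 1) := fun p hp ↦ by
    have := one_sub_ne_zero_of_norm_lt_one (mem_ball_zero_iff.1 hp.2)
    fun_prop (disch := exact pow_ne_zero _ this)
  obtain ⟨u, hu, hfix⟩ := exists_differentiableOn_isFixedPt isOpen_ball isOpen_ball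
    isClosed_closedBall isBounded_closedBall hKV (mem_closedBall_self (by positivity)) hF
    fun ζ hζ ↦ eventually_contracting_mul_inv_one_sub_pow (mem_ball_zero_iff.1 hζ)
  refine ⟨u, hu, ?_, fun ζ hζ ↦ ?_⟩
  · simpa using ((hfix 0 (mem_ball_self hN)).2).symm
  · obtain ⟨hK, hζfix⟩ := hfix ζ hζ
    have hne := pow_ne_zero (n + 1) (one_sub_ne_zero_of_norm_lt_one (mem_ball_zero_iff.1 (hKV hK)))
    calc u ζ * (1 - u ζ) ^ (n + 1) = ζ * ((1 - u ζ) ^ (n + 1))⁻¹ * (1 - u ζ) ^ (n + 1) :=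
          congrArg (· * _) hζfix.eq.symm
      _ = ζ := inv_mul_cancel_right₀ hne ζ

section Reparametrization

variable {r : ℝ}

theorem norm_div_ofReal_of_pos (hr : 0 < r) (z : ℂ) : ‖z / r‖ = ‖z‖ / r := by
  rw [norm_div, Complex.norm_real, Real.norm_of_nonneg hr.le]

theorem mapsTo_ball_mul_div_one_sub_div {c t : ℝ} (hc : 0 < c) (htr : t < r) :
    MapsTo (fun z : ℂ ↦ c * (z / (1 - z / r))) (ball 0 t) (ball 0 (c * (t / (1 - t / r)))) := by
  intro z hz
  rw [mem_ball_zero_iff] at hz ⊢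
  have hr : 0 < r := (norm_nonneg z).trans_lt (hz.trans htr)
  have hden : 0 < 1 - ‖z‖ / r := by rw [sub_pos, div_lt_one hr]; linarith
  rw [norm_mul, Complex.norm_real, Real.norm_of_nonneg hc.le, norm_div]
  refine mul_lt_mul_of_pos_left ?_ hc
  calc ‖z‖ / ‖1 - z / r‖ ≤ ‖z‖ / (1 - ‖z‖ / r) :=
        div_le_div_of_nonneg_left (norm_nonneg z) hden
          (sub_le_norm_one_sub (norm_div_ofReal_of_pos hr z).le)
    _ < t / (1 - t / r) := by
        have : 0 < 1 - t / r := by rw [sub_pos, div_lt_one hr]; exact htr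
        have : 0 ≤ t := (norm_nonneg z).trans hz.le
        gcongr

theorem differentiableOn_div_one_sub_div (hr : 0 < r) :
    DifferentiableOn ℂ (fun z : ℂ ↦ z / (1 - z / r)) (ball 0 r) := fun z hz ↦ by
  have : 1 - z / r ≠ 0 := one_sub_ne_zero_of_norm_lt_one <| by
    rw [norm_div_ofReal_of_pos hr, div_lt_one hr]; exact mem_ball_zero_iff.1 hz
  fun_prop (disch := exact this)

end Reparametrization

/-- There is a holomorphic branch, vanishing at `z = 0`, of the solution of the algebraic
equation `σw(1−w/ρ)^{n+1} = μz/(1−z/r)` on the disk `|z| < z₀`, where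
`z₀ = rρ/(ρ + μr/(σN)) < r` and `N = (n+1)^{n+1}/(n+2)^{n+2}`. -/
theorem holomorphic_branch_exists (σ ρ μ r : ℝ) (hσ : 0 < σ) (hρ : 0 < ρ) (hμ : 0 < μ)
    (hr : 0 < r) (n : ℕ) (N z₀ : ℝ)
    (hN : N = (n + 1 : ℝ) ^ (n + 1) / (n + 2 : ℝ) ^ (n + 2))
    (hz₀ : z₀ = r * ρ / (ρ + μ * r / (σ * N))) :
    z₀ < r ∧
    ∃ w : ℂ → ℂ, DifferentiableOn ℂ w (Metric.ball (0 : ℂ) z₀) ∧ w 0 = 0 ∧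
      ∀ z ∈ Metric.ball (0 : ℂ) z₀,
        σ * w z * (1 - w z / ρ) ^ (n + 1) = μ * z / (1 - z / r) := by
  replace hN : N = criticalValue n := hN
  have hNpos := hN ▸ criticalValue_pos n
  have hz₀r : z₀ < r := by
    rw [hz₀, div_lt_iff₀ (by positivity)]
    nlinarith [mul_pos hr (div_pos (mul_pos hμ hr) (mul_pos hσ hNpos))]
  -- `z₀` is the radius at which `|ζ|` reaches `N`.
  have hz₀N : μ / (σ * ρ) * (z₀ / (1 - z₀ / r)) = N := by
    rw [hz₀]
    field_simp
    ring
  obtain ⟨u, hu, hu0, hueq⟩ := exists_differentiableOn_mul_one_sub_pow_eq n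
  set g : ℂ → ℂ := fun z ↦ ((μ / (σ * ρ) : ℝ) : ℂ) * (z / (1 - z / r))
  have hg : MapsTo g (ball 0 z₀) (ball 0 (criticalValue n)) := by
    rw [← hN, ← hz₀N]
    exact mapsTo_ball_mul_div_one_sub_div (by positivity) hz₀r
  refine ⟨hz₀r, fun z ↦ ρ * u (g z), ?_, by simp [g, hu0], fun z hz ↦ ?_⟩
  · exact (hu.comp (((differentiableOn_div_one_sub_div hr).mono
      (ball_subset_ball hz₀r.le)).const_mul _) hg).const_mul _
  · have hσ' : (σ : ℂ) ≠ 0 := by exact_mod_cast hσ.ne'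
    have hρ' : (ρ : ℂ) ≠ 0 := by exact_mod_cast hρ.ne'
    calc σ * (ρ * u (g z)) * (1 - ρ * u (g z) / ρ) ^ (n + 1)
        = σ * ρ * (u (g z) * (1 - u (g z)) ^ (n + 1)) := by
          rw [mul_div_cancel_left₀ _ hρ']
          ring
      _ = σ * ρ * g z := by rw [hueq _ (hg hz)]
      _ = μ * z / (1 - z / r) := by
          simp only [g]
          push_cast
          field_simp
end
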